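/- arXiv:1805.05719 — 6 statements merged into one kernel-verified Lean document; each statement's English description precedes it below -/
import Mathlib

section
/- If a convex differentiable function F : ℝⁿ → ℝ with nonempty set of minimizers satisfies the flatness condition H1(γ) for some γ ≥ 1, then for every minimizer x* of F there exist M > 0 and η > 0 such that for all x with ‖x − x*‖ < η, F(x) − F* ≤ M‖x − x*‖^γ. -/
/-!
Along a ray `t ↦ xs + t • v`, the function `φ t = F (xs + t • v) - F xs` satisfies
`γ φ(t) ≤ t φ'(t)` by `H1(γ)`, i.e. `t ↦ φ(t) t^(-γ)` is nondecreasing. Hence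
`φ(t) ≤ t^γ φ(1)` for `t ∈ (0, 1]`; choosing `‖v‖ = ρ` so small that `F - F xs ≤ 1` on the ball
of radius `ρ` (continuity at `xs`) gives `F x - F xs ≤ ρ^(-γ) ‖x - xs‖^γ`.
-/

open Set

theorem monotoneOn_mul_rpow_neg_of_mul_le_mul_deriv {D : Set ℝ} (hD : Convex ℝ D)
    (hD₀ : D ⊆ Ioi 0) {φ φ' : ℝ → ℝ} {γ : ℝ} (hφ : ∀ t ∈ D, HasDerivAt φ (φ' t) t)
    (hle : ∀ t ∈ D, γ * φ t ≤ t * φ' t) :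
    MonotoneOn (fun t => φ t * t ^ (-γ)) D := by
  have hderiv : ∀ t ∈ D, HasDerivAt (fun t => φ t * t ^ (-γ))
      (φ' t * t ^ (-γ) + φ t * (-γ * t ^ (-γ - 1))) t := fun t ht =>
    (hφ t ht).mul (Real.hasDerivAt_rpow_const (Or.inl (hD₀ ht).ne'))
  refine monotoneOn_of_hasDerivWithinAt_nonneg hD
    (fun t ht => (hderiv t ht).continuousAt.continuousWithinAt)
    (fun t ht => (hderiv t (interior_subset ht)).hasDerivWithinAt) fun t ht => ?_
  have ht : t ∈ D := interior_subset ht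
  have ht₀ : 0 < t := hD₀ ht
  have hsplit : t ^ (-γ) = t * t ^ (-γ - 1) := by
    conv_lhs => rw [show -γ = 1 + (-γ - 1) by ring, Real.rpow_add ht₀, Real.rpow_one]
  have := mul_nonneg (sub_nonneg.2 (hle t ht)) (Real.rpow_nonneg ht₀.le (-γ - 1))
  rw [hsplit]
  linarith

theorem le_rpow_mul_of_mul_le_mul_deriv {φ φ' : ℝ → ℝ} {γ : ℝ}
    (hφ : ∀ t ∈ Ioc 0 1, HasDerivAt φ (φ' t) t) (hle : ∀ t ∈ Ioc 0 1, γ * φ t ≤ t * φ' t)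
    {t : ℝ} (ht : t ∈ Ioc 0 1) : φ t ≤ t ^ γ * φ 1 := by
  have hmono := monotoneOn_mul_rpow_neg_of_mul_le_mul_deriv (convex_Ioc 0 1)
    Ioc_subset_Ioi_self hφ hle ht (right_mem_Ioc.2 one_pos) ht.2
  simp only [Real.one_rpow, mul_one] at hmono
  calc φ t = t ^ γ * (φ t * t ^ (-γ)) := by
        rw [Real.rpow_neg ht.1.le]; field_simp [(Real.rpow_pos_of_pos ht.1 γ).ne']
    _ ≤ t ^ γ * φ 1 := mul_le_mul_of_nonneg_left hmono (Real.rpow_nonneg ht.1.le γ)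

section NormedSpace

variable {E : Type*} [NormedAddCommGroup E] [NormedSpace ℝ E] {F : E → ℝ} {xs : E} {γ η : ℝ}

theorem sub_le_rpow_mul_sub_of_le_fderiv (hγ : 0 < γ)
    (hdiff : ∀ x ∈ Metric.ball xs η, DifferentiableAt ℝ F x)
    (hH : ∀ x ∈ Metric.ball xs η, F x - F xs ≤ (1 / γ) * fderiv ℝ F x (x - xs))
    {v : E} (hv : ‖v‖ < η) {t : ℝ} (ht : t ∈ Ioc 0 1) :
    F (xs + t • v) - F xs ≤ t ^ γ * (F (xs + v) - F xs) := by
  have hmem : ∀ s ∈ Ioc (0 : ℝ) 1, xs + s • v ∈ Metric.ball xs η := fun s hs => by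
    rw [mem_ball_iff_norm, add_sub_cancel_left, norm_smul, Real.norm_of_nonneg hs.1.le]
    exact (mul_le_of_le_one_left (norm_nonneg v) hs.2).trans_lt hv
  have hφ : ∀ s ∈ Ioc (0 : ℝ) 1, HasDerivAt (fun s => F (xs + s • v) - F xs)
      (fderiv ℝ F (xs + s • v) v) s := fun s hs => by
    have hline : HasDerivAt (fun s : ℝ => xs + s • v) v s := by
      simpa using ((hasDerivAt_id s).smul_const v).const_add xs
    exact ((hdiff _ (hmem s hs)).hasFDerivAt.comp_hasDerivAt s hline).sub_const (F xs)
  have hle : ∀ s ∈ Ioc (0 : ℝ) 1,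
      γ * (F (xs + s • v) - F xs) ≤ s * fderiv ℝ F (xs + s • v) v := fun s hs => by
    have h := hH _ (hmem s hs)
    rw [add_sub_cancel_left, map_smul, smul_eq_mul, one_div, le_inv_mul_iff₀ hγ] at h
    exact h
  simpa using le_rpow_mul_of_mul_le_mul_deriv hφ hle ht

theorem exists_sub_le_mul_norm_rpow_of_le_fderiv (hγ : 0 < γ) (hη : 0 < η)
    (hdiff : ∀ x ∈ Metric.ball xs η, DifferentiableAt ℝ F x)
    (hH : ∀ x ∈ Metric.ball xs η, F x - F xs ≤ (1 / γ) * fderiv ℝ F x (x - xs)) :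
    ∃ M > 0, ∃ ρ > 0, ∀ x, ‖x - xs‖ < ρ → F x - F xs ≤ M * ‖x - xs‖ ^ γ := by
  obtain ⟨δ, hδ, hcont⟩ := Metric.continuousAt_iff.1
    (hdiff xs (Metric.mem_ball_self hη)).continuousAt 1 one_pos
  set ρ := min η δ / 2
  have hρ : 0 < ρ := by positivity
  refine ⟨(ρ ^ γ)⁻¹, by positivity, ρ, hρ, fun x hx => ?_⟩
  rcases (norm_nonneg (x - xs)).eq_or_lt with hr | hr
  · obtain rfl : x = xs := by simpa [sub_eq_zero] using hr.symm
    simp [Real.zero_rpow hγ.ne']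
  set r := ‖x - xs‖
  have hρη : ρ < η := by simp only [ρ]; linarith [min_le_left η δ]
  have hρδ : ρ < δ := by simp only [ρ]; linarith [min_le_right η δ]
  set v := (ρ / r) • (x - xs)
  have hv : ‖v‖ = ρ := by
    rw [norm_smul, Real.norm_of_nonneg (by positivity), div_mul_cancel₀ _ hr.ne']
  have hx_eq : x = xs + (r / ρ) • v := by
    rw [smul_smul, div_mul_div_cancel₀ hρ.ne', div_self hr.ne', one_smul,
      add_sub_cancel]
  have hsphere : F (xs + v) - F xs ≤ 1 := by
    have := hcont (x := xs + v) (by rw [dist_eq_norm, add_sub_cancel_left, hv]; exact hρδ)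
    rw [Real.dist_eq] at this
    exact (le_abs_self _).trans this.le
  have ht : r / ρ ∈ Ioc 0 1 := ⟨by positivity, (div_le_one hρ).2 hx.le⟩
  calc F x - F xs ≤ (r / ρ) ^ γ * (F (xs + v) - F xs) := by
        rw [hx_eq]; exact sub_le_rpow_mul_sub_of_le_fderiv hγ hdiff hH (hv.trans_lt hρη) ht
    _ ≤ (r / ρ) ^ γ * 1 := mul_le_mul_of_nonneg_left hsphere (by positivity)
    _ = (ρ ^ γ)⁻¹ * r ^ γ := by
        rw [mul_one, Real.div_rpow hr.le hρ.le, div_eq_inv_mul]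

end NormedSpace

theorem stmt1_general {n : ℕ} (F : EuclideanSpace ℝ (Fin n) → ℝ)
    (hdiff : Differentiable ℝ F)
    (γ : ℝ) (hγ : 1 ≤ γ)
    (hH1 : ∀ xs, (∀ z, F xs ≤ F z) → ∃ η > 0,
      ∀ x, ‖x - xs‖ < η → F x - F xs ≤ (1 / γ) * (inner ℝ (gradient F x) (x - xs) : ℝ)) :
    ∀ xs, (∀ z, F xs ≤ F z) → ∃ M > 0, ∃ η > 0,
      ∀ x, ‖x - xs‖ < η → F x - F xs ≤ M * ‖x - xs‖ ^ γ := by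
  intro xs hxs
  obtain ⟨η, hη, hH⟩ := hH1 xs hxs
  refine exists_sub_le_mul_norm_rpow_of_le_fderiv (by linarith) hη (fun x _ => hdiff x)
    fun x hx => ?_
  rw [← inner_gradient_left]
  exact hH x (mem_ball_iff_norm.1 hx)

/-- If a convex differentiable function `F : ℝⁿ → ℝ` with nonempty set of
minimizers satisfies `H1(γ)` for some `γ ≥ 1`, then for every minimizer `x*` there exist
`M > 0` and `η > 0` such that `F x − F* ≤ M ‖x − x*‖^γ` for all `x` with `‖x − x*‖ < η`. -/
theorem stmt1 {n : ℕ} (F : EuclideanSpace ℝ (Fin n) → ℝ)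
    (hconv : ConvexOn ℝ Set.univ F) (hdiff : Differentiable ℝ F)
    (hmin : ∃ y, ∀ z, F y ≤ F z)
    (γ : ℝ) (hγ : 1 ≤ γ)
    (hH1 : ∀ xs, (∀ z, F xs ≤ F z) → ∃ η > 0,
      ∀ x, ‖x - xs‖ < η → F x - F xs ≤ (1 / γ) * (inner ℝ (gradient F x) (x - xs) : ℝ)) :
    ∀ xs, (∀ z, F xs ≤ F z) → ∃ M > 0, ∃ η > 0,
      ∀ x, ‖x - xs‖ < η → F x - F xs ≤ M * ‖x - xs‖ ^ γ :=
  stmt1_general F hdiff γ hγ hH1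
end

section
/- Let g : ℝ → ℝ be a convex differentiable function with g(0) = 0 and 0 ∈ argmin g, and let γ ≥ 1. If g(t) ≤ (t/γ)·g'(t) for all t ∈ [0,1], then the function t ↦ t^(−γ) g(t) is monotonically increasing on (0,1] and g(t) ≤ g(1)·t^γ for all t ∈ [0,1]. -/
/-! Since `(t ^ (-γ) g t)' = t ^ (-γ - 1) (t g' t - γ g t)`, the hypothesis `γ g ≤ t g'` makes
`t ^ (-γ) g t` nondecreasing on `(0, 1]`; comparing `t` with `1` and multiplying by `t ^ γ`
gives the bound, and `t = 0` is covered by `g 0 = 0`. -/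

open Set

theorem hasDerivAt_rpow_neg_mul {g : ℝ → ℝ} {g' γ x : ℝ} (hx : x ≠ 0)
    (hg : HasDerivAt g g' x) :
    HasDerivAt (fun t => t ^ (-γ) * g t) (x ^ (-γ - 1) * (x * g' - γ * g x)) x := by
  have hpow : x ^ (-γ) = x ^ (-γ - 1) * x := by
    rw [← Real.rpow_add_one hx]
    ring_nf
  refine ((Real.hasDerivAt_rpow_const (p := -γ) (Or.inl hx)).mul hg).congr_deriv ?_
  rw [hpow]
  ring

theorem monotoneOn_rpow_neg_mul_of_mul_le_mul_deriv {g g' : ℝ → ℝ} {γ : ℝ} {D : Set ℝ}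
    (hD : Convex ℝ D) (hDpos : D ⊆ Ioi 0) (hg : ∀ x ∈ D, HasDerivAt g (g' x) x)
    (hineq : ∀ x ∈ interior D, γ * g x ≤ x * g' x) :
    MonotoneOn (fun t => t ^ (-γ) * g t) D := by
  have hderiv : ∀ x ∈ D, HasDerivAt (fun t => t ^ (-γ) * g t)
      (x ^ (-γ - 1) * (x * g' x - γ * g x)) x :=
    fun x hx => hasDerivAt_rpow_neg_mul (hDpos hx).ne' (hg x hx)
  refine monotoneOn_of_deriv_nonneg hD
    (fun x hx => (hderiv x hx).continuousAt.continuousWithinAt)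
    (fun x hx => (hderiv x (interior_subset hx)).differentiableAt.differentiableWithinAt)
    (fun x hx => ?_)
  rw [(hderiv x (interior_subset hx)).deriv]
  have hx0 : 0 < x := hDpos (interior_subset hx)
  exact mul_nonneg (Real.rpow_nonneg hx0.le _) (sub_nonneg.mpr (hineq x hx))

theorem le_mul_div_rpow_of_monotoneOn {g : ℝ → ℝ} {γ b : ℝ} (hγ : 0 < γ) (hg0 : g 0 = 0)
    (hb : 0 < b) (hmono : MonotoneOn (fun t => t ^ (-γ) * g t) (Ioc 0 b)) :
    ∀ t ∈ Icc 0 b, g t ≤ g b * (t / b) ^ γ := by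
  rintro t ⟨ht0, htb⟩
  rcases ht0.eq_or_lt with rfl | ht0
  · simp [hg0, Real.zero_rpow hγ.ne']
  have hle : t ^ (-γ) * g t ≤ b ^ (-γ) * g b :=
    hmono ⟨ht0, htb⟩ ⟨hb, le_rfl⟩ htb
  have htγ : 0 < t ^ γ := Real.rpow_pos_of_pos ht0 γ
  calc g t = t ^ γ * (t ^ (-γ) * g t) := by
        rw [← mul_assoc, ← Real.rpow_add ht0, add_neg_cancel, Real.rpow_zero, one_mul]
    _ ≤ t ^ γ * (b ^ (-γ) * g b) := mul_le_mul_of_nonneg_left hle htγ.le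
    _ = g b * (t / b) ^ γ := by
        rw [Real.div_rpow ht0.le hb.le, Real.rpow_neg hb.le]
        ring

theorem stmt2_general (g : ℝ → ℝ) (g' : ℝ → ℝ)
    (hdiff : ∀ t, HasDerivAt g (g' t) t)
    (hg0 : g 0 = 0)
    (γ : ℝ) (hγ : 1 ≤ γ)
    (hineq : ∀ t ∈ Set.Icc (0 : ℝ) 1, g t ≤ (t / γ) * g' t) :
    MonotoneOn (fun t : ℝ => t ^ (-γ) * g t) (Set.Ioc 0 1) ∧
      ∀ t ∈ Set.Icc (0 : ℝ) 1, g t ≤ g 1 * t ^ γ := by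
  have hγ0 : 0 < γ := one_pos.trans_le hγ
  have hmono : MonotoneOn (fun t : ℝ => t ^ (-γ) * g t) (Ioc 0 1) := by
    refine monotoneOn_rpow_neg_mul_of_mul_le_mul_deriv (convex_Ioc 0 1) Ioc_subset_Ioi_self
      (fun x _ => hdiff x) (fun x hx => ?_)
    rw [interior_Ioc] at hx
    have h := hineq x (Ioo_subset_Icc_self hx)
    rwa [div_mul_eq_mul_div, le_div_iff₀ hγ0, mul_comm] at h
  refine ⟨hmono, fun t ht => ?_⟩
  simpa using le_mul_div_rpow_of_monotoneOn hγ0 hg0 one_pos hmono t ht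

/-- Let `g : ℝ → ℝ` be a convex differentiable function with `g 0 = 0` and
`0 ∈ argmin g`, and let `γ ≥ 1`. If `g t ≤ (t/γ) g'(t)` for all `t ∈ [0,1]`, then
`t ↦ t^(−γ) g t` is monotonically increasing on `(0,1]` and `g t ≤ g 1 · t^γ` on `[0,1]`. -/
theorem stmt2 (g : ℝ → ℝ) (g' : ℝ → ℝ)
    (hconv : ConvexOn ℝ Set.univ g) (hdiff : ∀ t, HasDerivAt g (g' t) t)
    (hg0 : g 0 = 0) (hmin : ∀ t, g 0 ≤ g t)
    (γ : ℝ) (hγ : 1 ≤ γ)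
    (hineq : ∀ t ∈ Set.Icc (0 : ℝ) 1, g t ≤ (t / γ) * g' t) :
    MonotoneOn (fun t : ℝ => t ^ (-γ) * g t) (Set.Ioc 0 1) ∧
      ∀ t ∈ Set.Icc (0 : ℝ) 1, g t ≤ g 1 * t ^ γ :=
  stmt2_general g g' hdiff hg0 γ hγ hineq
end

section
/- Let F : ℝⁿ → ℝ be a convex differentiable function satisfying the growth condition H2(r) for some r ≥ 1, and assume the set X* = argmin F is compact. Then there exist K > 0 and ε > 0 such that for every x ∈ ℝⁿ with d(x, X*) ≤ ε one has K·d(x, X*)^r ≤ F(x) − F*. -/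
/-!
Compactness turns the local growth bounds into a uniform one: the bounds `K * g ≤ h` valid near
each point of a compact set `S` combine, through a finite subcover and the minimum of finitely
many constants, into a single bound on a neighbourhood of `S`, and every neighbourhood of a
compact set in a metric space contains a uniform thickening `{x | infDist x S < δ}`.
-/

open Filter Topology Metric

theorem IsCompact.exists_pos_eventually_nhdsSet_mul_le {X : Type*} [TopologicalSpace X]
    {S : Set X} (hS : IsCompact S) {g h : X → ℝ} (hg : 0 ≤ g)
    (hloc : ∀ s ∈ S, ∃ K > 0, ∀ᶠ x in 𝓝 s, K * g x ≤ h x) :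
    ∃ K > 0, ∀ᶠ x in 𝓝ˢ S, K * g x ≤ h x := by
  refine hS.induction_on (p := fun T => ∃ K > 0, ∀ᶠ x in 𝓝ˢ T, K * g x ≤ h x)
    ⟨1, one_pos, by simp [nhdsSet_empty]⟩ ?_ ?_ ?_
  · rintro T U hTU ⟨K, hK, hU⟩
    exact ⟨K, hK, hU.filter_mono (nhdsSet_mono hTU)⟩
  · rintro T U ⟨K, hK, hT⟩ ⟨L, hL, hU⟩
    have weaken : ∀ {M}, M ≥ min K L → ∀ x, M * g x ≤ h x → min K L * g x ≤ h x :=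
      fun hM x hx => (mul_le_mul_of_nonneg_right hM (hg x)).trans hx
    refine ⟨min K L, lt_min hK hL, ?_⟩
    rw [nhdsSet_union, eventually_sup]
    exact ⟨hT.mono (weaken (min_le_left K L)), hU.mono (weaken (min_le_right K L))⟩
  · intro s hs
    obtain ⟨K, hK, hev⟩ := hloc s hs
    obtain ⟨U, hU, hUo, hsU⟩ := mem_nhds_iff.1 hev
    refine ⟨U, mem_nhdsWithin_of_mem_nhds (hUo.mem_nhds hsU), K, hK, ?_⟩
    rw [hUo.nhdsSet_eq]
    exact hU

theorem IsCompact.exists_pos_forall_infDist_le_of_eventually {X : Type*} [PseudoMetricSpace X]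
    {S : Set X} (hS : IsCompact S) (hne : S.Nonempty) {P : X → Prop}
    (hP : ∀ᶠ x in 𝓝ˢ S, P x) :
    ∃ ε > 0, ∀ x, infDist x S ≤ ε → P x := by
  obtain ⟨δ, hδ, hsub⟩ := (hasBasis_nhdsSet_thickening hS).eventually_iff.1 hP
  exact ⟨δ / 2, half_pos hδ, fun x hx =>
    hsub ((mem_thickening_iff_infDist_lt hne).2 (by linarith))⟩

theorem stmt3_general {n : ℕ} (F : EuclideanSpace ℝ (Fin n) → ℝ)
    (xstar : EuclideanSpace ℝ (Fin n)) (hxstar : ∀ z, F xstar ≤ F z)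
    (hcpt : IsCompact {y : EuclideanSpace ℝ (Fin n) | ∀ z, F y ≤ F z})
    (r : ℝ)
    (hH2 : ∀ xs, (∀ z, F xs ≤ F z) → ∃ K > 0, ∃ ε > 0,
      ∀ x, ‖x - xs‖ < ε →
        K * Metric.infDist x {y : EuclideanSpace ℝ (Fin n) | ∀ z, F y ≤ F z} ^ r
          ≤ F x - F xs) :
    ∃ K > 0, ∃ ε > 0, ∀ x : EuclideanSpace ℝ (Fin n),
      Metric.infDist x {y : EuclideanSpace ℝ (Fin n) | ∀ z, F y ≤ F z} ≤ ε →
        K * Metric.infDist x {y : EuclideanSpace ℝ (Fin n) | ∀ z, F y ≤ F z} ^ r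
          ≤ F x - F xstar := by
  set S := {y : EuclideanSpace ℝ (Fin n) | ∀ z, F y ≤ F z}
  have hmin : ∀ s ∈ S, F s = F xstar := fun s hs => le_antisymm (hs xstar) (hxstar s)
  have hloc : ∀ s ∈ S, ∃ K > 0, ∀ᶠ x in 𝓝 s, K * infDist x S ^ r ≤ F x - F xstar := by
    intro s hs
    obtain ⟨K, hK, ε, hε, hbound⟩ := hH2 s hs
    refine ⟨K, hK, Filter.mem_of_superset (ball_mem_nhds s hε) fun x hx => ?_⟩
    rw [← hmin s hs]
    exact hbound x (by rwa [← dist_eq_norm])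
  obtain ⟨K, hK, hev⟩ :=
    hcpt.exists_pos_eventually_nhdsSet_mul_le (fun x => Real.rpow_nonneg infDist_nonneg r) hloc
  obtain ⟨ε, hε, hbound⟩ := hcpt.exists_pos_forall_infDist_le_of_eventually ⟨xstar, hxstar⟩ hev
  exact ⟨K, hK, ε, hε, hbound⟩

/-- Let `F : ℝⁿ → ℝ` be a convex differentiable function satisfying the growth
condition `H2(r)` for some `r ≥ 1`, and assume `X* = argmin F` is (nonempty and) compact.
Then there exist `K > 0` and `ε > 0` such that for every `x` with `d(x, X*) ≤ ε`,
`K · d(x, X*)^r ≤ F x − F*`. -/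
theorem stmt3 {n : ℕ} (F : EuclideanSpace ℝ (Fin n) → ℝ)
    (hconv : ConvexOn ℝ Set.univ F) (hdiff : Differentiable ℝ F)
    (xstar : EuclideanSpace ℝ (Fin n)) (hxstar : ∀ z, F xstar ≤ F z)
    (hcpt : IsCompact {y : EuclideanSpace ℝ (Fin n) | ∀ z, F y ≤ F z})
    (r : ℝ) (hr : 1 ≤ r)
    (hH2 : ∀ xs, (∀ z, F xs ≤ F z) → ∃ K > 0, ∃ ε > 0,
      ∀ x, ‖x - xs‖ < ε →
        K * Metric.infDist x {y : EuclideanSpace ℝ (Fin n) | ∀ z, F y ≤ F z} ^ r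
          ≤ F x - F xs) :
    ∃ K > 0, ∃ ε > 0, ∀ x : EuclideanSpace ℝ (Fin n),
      Metric.infDist x {y : EuclideanSpace ℝ (Fin n) | ∀ z, F y ≤ F z} ≤ ε →
        K * Metric.infDist x {y : EuclideanSpace ℝ (Fin n) | ∀ z, F y ≤ F z} ^ r
          ≤ F x - F xstar :=
  stmt3_general F xstar hxstar hcpt r hH2
end

section
/- Let y : [T₀, ∞) → ℝ be a continuously differentiable function. If y is bounded, then for every T > max(T₀, 0) and every ε > 0 there exists t₁ > T such that |y'(t₁)| ≤ ε/t₁. -/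
/-!
Suppose `|y'(t)| > ε / t` for all `t > T`. Then `y'` has no zero on `(T, ∞)`, so by continuity it
has constant sign there; replacing `y` by `-y` we may assume `y' > ε / t`. Then `y - ε log` is
increasing, so `y` grows at least like `ε log t` and is unbounded.
-/

open Set Filter Real

theorem IsPreconnected.pos_or_neg_of_ne_zero {α β : Type*} [TopologicalSpace α] [LinearOrder β]
    [TopologicalSpace β] [OrderClosedTopology β] [Zero β] {s : Set α} (hs : IsPreconnected s)
    {f : α → β} (hf : ContinuousOn f s) (hne : ∀ x ∈ s, f x ≠ 0) :
    (∀ x ∈ s, 0 < f x) ∨ (∀ x ∈ s, f x < 0) := by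
  by_contra! h
  obtain ⟨⟨a, ha, hfa⟩, ⟨b, hb, hfb⟩⟩ := h
  obtain ⟨c, hc, hfc⟩ := hs.intermediate_value ha hb hf ⟨hfa, hfb⟩
  exact hne c hc hfc

theorem tendsto_atTop_of_div_le_deriv {f f' : ℝ → ℝ} {a ε : ℝ} (ha : 0 ≤ a) (hε : 0 < ε)
    (hf : ∀ t ∈ Ioi a, HasDerivAt f (f' t) t) (hf' : ∀ t ∈ Ioi a, ε / t ≤ f' t) :
    Tendsto f atTop atTop := by
  have hg : ∀ t ∈ Ioi a, HasDerivAt (fun t => f t - ε * log t) (f' t - ε * t⁻¹) t :=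
    fun t ht => (hf t ht).sub ((hasDerivAt_log (ha.trans_lt ht).ne').const_mul ε)
  have hmono : MonotoneOn (fun t => f t - ε * log t) (Ioi a) := by
    refine monotoneOn_of_hasDerivWithinAt_nonneg (convex_Ioi a)
      (fun t ht => (hg t ht).continuousAt.continuousWithinAt)
      (fun t ht => (hg t (interior_subset ht)).hasDerivWithinAt) fun t ht => ?_
    rw [interior_Ioi] at ht
    simpa [div_eq_mul_inv] using hf' t ht
  have hb : a + 1 ∈ Ioi a := lt_add_one a
  have hlower : ∀ t ≥ a + 1, f (a + 1) - ε * log (a + 1) + ε * log t ≤ f t := fun t ht => by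
    linarith [hmono hb (hb.trans_le ht) ht]
  exact tendsto_atTop_mono' atTop (eventually_ge_atTop (a + 1) |>.mono hlower)
    (tendsto_atTop_add_const_left _ _ (tendsto_log_atTop.const_mul_atTop hε))

/-- Let `y : [T₀, ∞) → ℝ` be continuously differentiable and bounded.
Then for every `T > max(T₀, 0)` and every `ε > 0` there exists `t₁ > T` such that
`|y'(t₁)| ≤ ε / t₁`. -/
theorem stmt13 (T₀ : ℝ) (y y' : ℝ → ℝ)
    (hy : ∀ t ∈ Set.Ici T₀, HasDerivAt y (y' t) t)
    (hy' : ContinuousOn y' (Set.Ici T₀))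
    (hbdd : ∃ M, ∀ t ∈ Set.Ici T₀, |y t| ≤ M) :
    ∀ T > max T₀ 0, ∀ ε > 0, ∃ t₁ > T, |y' t₁| ≤ ε / t₁ := by
  intro T hT ε hε
  by_contra! hlarge
  obtain ⟨hT₀, hT0⟩ := max_lt_iff.mp hT
  have hsub : Ioi T ⊆ Ici T₀ := fun t ht => le_of_lt (hT₀.trans ht)
  have hunbdd : ¬ Tendsto (fun t => |y t|) atTop atTop := fun h => by
    obtain ⟨M, hM⟩ := hbdd
    obtain ⟨t, ht, hMt⟩ := ((eventually_ge_atTop T₀).and (h.eventually_gt_atTop M)).exists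
    exact (hM t ht).not_gt hMt
  have hne : ∀ t ∈ Ioi T, y' t ≠ 0 := fun t ht h0 => by
    simpa [h0] using (div_pos hε (hT0.trans ht)).trans (hlarge t ht)
  rcases isPreconnected_Ioi.pos_or_neg_of_ne_zero (hy'.mono hsub) hne with hpos | hneg
  · have hgrowth : Tendsto y atTop atTop :=
      tendsto_atTop_of_div_le_deriv hT0.le hε (fun t ht => hy t (hsub ht)) fun t ht => by
        simpa [abs_of_pos (hpos t ht)] using (hlarge t ht).le
    exact hunbdd (tendsto_abs_atTop_atTop.comp hgrowth)
  · have hgrowth : Tendsto (-y) atTop atTop :=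
      tendsto_atTop_of_div_le_deriv hT0.le hε (fun t ht => (hy t (hsub ht)).neg) fun t ht => by
        simpa [abs_of_neg (hneg t ht)] using (hlarge t ht).le
    exact hunbdd (by simpa [Function.comp_def] using tendsto_abs_atTop_atTop.comp hgrowth)
end

section
/- Let x be a twice continuously differentiable solution on [t₀, ∞) of the ODE x''(t) + (α/t)x'(t) + ∇F(x(t)) = 0, let x* be a minimizer of F, let λ, ξ be real numbers, and define a(t) = t(F(x(t)) − F*), b(t) = (1/(2t))‖λ(x(t) − x*) + t x'(t)‖², c(t) = (1/(2t))‖x(t) − x*‖², and E(t) = t²(F(x(t)) − F*) + (1/2)‖λ(x(t) − x*) + t x'(t)‖² + (ξ/2)‖x(t) − x*‖². Then for all t ≥ t₀: E'(t) = 2a(t) + λt⟨−∇F(x(t)), x(t) − x*⟩ + (ξ − λ(λ + 1 − α))⟨x'(t), x(t) − x*⟩ + 2(λ + 1 − α)b(t) − 2λ²(λ + 1 − α)c(t). -/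
/-!
Differentiate the energy term by term and eliminate `x''` with `x'' = -(α/t) x' - ∇F(x)`.
The terms `t‖x'‖²` and `⟨x', x - x*⟩` left over are then regrouped into `‖λ(x - x*) + t x'‖² / t`
and `‖x - x*‖² / t`, which is where the factor `λ + 1 - α` comes from.
-/

open RealInnerProductSpace

section LyapunovEnergy

variable {E : Type*} [NormedAddCommGroup E] [InnerProductSpace ℝ E]

theorem HasGradientAt.comp_hasDerivAt [CompleteSpace E] {f : E → ℝ} {g : E} {x : ℝ → E} {v : E}
    {t : ℝ} (hf : HasGradientAt f g (x t)) (hx : HasDerivAt x v t) :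
    HasDerivAt (fun s => f (x s)) ⟪g, v⟫ t :=
  hf.hasFDerivAt.comp_hasDerivAt t hx

theorem hasDerivAt_lyapunovEnergy [CompleteSpace E] {f : E → ℝ} {g : E} {x x' : ℝ → E}
    {a xstar : E} {t : ℝ} (c lam ξ : ℝ) (hf : HasGradientAt f g (x t)) (hx : HasDerivAt x (x' t) t)
    (hx' : HasDerivAt x' a t) :
    HasDerivAt (fun s : ℝ => s ^ 2 * (f (x s) - c)
        + (1 / 2) * ‖lam • (x s - xstar) + s • x' s‖ ^ 2
        + (ξ / 2) * ‖x s - xstar‖ ^ 2)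
      (2 * t * (f (x t) - c) + t ^ 2 * ⟪g, x' t⟫
        + ⟪lam • (x t - xstar) + t • x' t, (lam + 1) • x' t + t • a⟫
        + ξ * ⟪x t - xstar, x' t⟫) t := by
  have hu : HasDerivAt (fun s => x s - xstar) (x' t) t := hx.sub_const xstar
  have hw : HasDerivAt (fun s => lam • (x s - xstar) + s • x' s)
      ((lam + 1) • x' t + t • a) t := by
    refine ((hu.const_smul lam).add ((hasDerivAt_id' t).smul hx')).congr_deriv ?_
    rw [one_smul, add_smul, one_smul]
    abel
  refine ((((hasDerivAt_pow 2 t).mul ((hf.comp_hasDerivAt hx).sub_const c)).add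
    (hw.norm_sq.const_mul (1 / 2))).add (hu.norm_sq.const_mul (ξ / 2))).congr_deriv ?_
  push_cast
  ring

theorem lyapunovEnergy_deriv_identity (u v g : E) {t : ℝ} (ht : t ≠ 0) (lam α : ℝ) :
    t ^ 2 * ⟪g, v⟫ + ⟪lam • u + t • v, (lam + 1) • v + t • (-(α / t) • v - g)⟫
      = lam * t * ⟪-g, u⟫ - lam * (lam + 1 - α) * ⟪v, u⟫
        + 2 * (lam + 1 - α) * ((1 / (2 * t)) * ‖lam • u + t • v‖ ^ 2)
        - 2 * lam ^ 2 * (lam + 1 - α) * ((1 / (2 * t)) * ‖u‖ ^ 2) := by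
  rw [← real_inner_self_eq_norm_sq, ← real_inner_self_eq_norm_sq]
  simp only [inner_add_left, inner_add_right, inner_sub_right, inner_neg_left, inner_neg_right,
    real_inner_smul_left, real_inner_smul_right, neg_smul]
  rw [real_inner_comm g v, real_inner_comm u v, real_inner_comm g u]
  field_simp
  ring

end LyapunovEnergy

theorem stmt14_general {n : ℕ} (F : EuclideanSpace ℝ (Fin n) → ℝ)
    (hdiff : Differentiable ℝ F)
    (α t₀ : ℝ) (ht₀ : 0 < t₀)
    (x x' x'' : ℝ → EuclideanSpace ℝ (Fin n))
    (hx : ∀ t ∈ Set.Ici t₀, HasDerivAt x (x' t) t)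
    (hx' : ∀ t ∈ Set.Ici t₀, HasDerivAt x' (x'' t) t)
    (hode : ∀ t ∈ Set.Ici t₀, x'' t + (α / t) • x' t + gradient F (x t) = 0)
    (xstar : EuclideanSpace ℝ (Fin n))
    (lam ξ : ℝ) :
    ∀ t ∈ Set.Ici t₀,
      HasDerivAt (fun s : ℝ => s ^ 2 * (F (x s) - F xstar)
          + (1 / 2) * ‖lam • (x s - xstar) + s • x' s‖ ^ 2
          + (ξ / 2) * ‖x s - xstar‖ ^ 2)
        (2 * (t * (F (x t) - F xstar))
          + lam * t * (inner ℝ (-(gradient F (x t))) (x t - xstar) : ℝ)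
          + (ξ - lam * (lam + 1 - α)) * (inner ℝ (x' t) (x t - xstar) : ℝ)
          + 2 * (lam + 1 - α) * ((1 / (2 * t)) * ‖lam • (x t - xstar) + t • x' t‖ ^ 2)
          - 2 * lam ^ 2 * (lam + 1 - α) * ((1 / (2 * t)) * ‖x t - xstar‖ ^ 2)) t := by
  intro t ht
  have ht0 : t ≠ 0 := (ht₀.trans_le ht).ne'
  have hacc : x'' t = -(α / t) • x' t - gradient F (x t) := by
    rw [neg_smul, eq_sub_iff_add_eq, eq_neg_iff_add_eq_zero, add_right_comm, hode t ht]
  convert hasDerivAt_lyapunovEnergy (F xstar) lam ξ (hdiff (x t)).hasGradientAt (hx t ht)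
    (hx' t ht) using 1
  rw [hacc, add_assoc (2 * t * _), lyapunovEnergy_deriv_identity _ _ _ ht0,
    real_inner_comm (x' t)]
  ring

/-- Derivative of the Lyapunov energy
`E(t) = t²(F(x t) − F*) + ½‖λ(x t − x*) + t x' t‖² + (ξ/2)‖x t − x*‖²` along a solution
of `x'' + (α/t) x' + ∇F(x) = 0`:
`E'(t) = 2a(t) + λt⟨−∇F(x t), x t − x*⟩ + (ξ − λ(λ+1−α))⟨x' t, x t − x*⟩
        + 2(λ+1−α) b(t) − 2λ²(λ+1−α) c(t)`. -/
theorem stmt14 {n : ℕ} (F : EuclideanSpace ℝ (Fin n) → ℝ)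
    (hconv : ConvexOn ℝ Set.univ F) (hdiff : Differentiable ℝ F)
    (α t₀ : ℝ) (hα : 0 < α) (ht₀ : 0 < t₀)
    (x x' x'' : ℝ → EuclideanSpace ℝ (Fin n))
    (hx : ∀ t ∈ Set.Ici t₀, HasDerivAt x (x' t) t)
    (hx' : ∀ t ∈ Set.Ici t₀, HasDerivAt x' (x'' t) t)
    (hx'' : ContinuousOn x'' (Set.Ici t₀))
    (hode : ∀ t ∈ Set.Ici t₀, x'' t + (α / t) • x' t + gradient F (x t) = 0)
    (xstar : EuclideanSpace ℝ (Fin n)) (hxstar : ∀ z, F xstar ≤ F z)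
    (lam ξ : ℝ) :
    ∀ t ∈ Set.Ici t₀,
      HasDerivAt (fun s : ℝ => s ^ 2 * (F (x s) - F xstar)
          + (1 / 2) * ‖lam • (x s - xstar) + s • x' s‖ ^ 2
          + (ξ / 2) * ‖x s - xstar‖ ^ 2)
        (2 * (t * (F (x t) - F xstar))
          + lam * t * (inner ℝ (-(gradient F (x t))) (x t - xstar) : ℝ)
          + (ξ - lam * (lam + 1 - α)) * (inner ℝ (x' t) (x t - xstar) : ℝ)
          + 2 * (lam + 1 - α) * ((1 / (2 * t)) * ‖lam • (x t - xstar) + t • x' t‖ ^ 2)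
          - 2 * lam ^ 2 * (lam + 1 - α) * ((1 / (2 * t)) * ‖x t - xstar‖ ^ 2)) t :=
  stmt14_general F hdiff α t₀ ht₀ x x' x'' hx hx' hode xstar lam ξ
end

section
/- Let γ > 1, α > 0, λ, p ∈ ℝ, and let F(y) = |y|^γ on ℝ, whose minimum value is F* = 0 attained at x* = 0. Let x be a twice continuously differentiable solution on [t₀, ∞) of x''(t) + (α/t)x'(t) + F'(x(t)) = 0. Set ξ = λ(λ + 1 − α), a(t) = t·F(x(t)), b(t) = (1/(2t))|λ x(t) + t x'(t)|², c(t) = (1/(2t))|x(t)|², E(t) = t²F(x(t)) + (1/2)|λ x(t) + t x'(t)|² + (ξ/2)|x(t)|², and H(t) = t^p E(t). Then for all t ≥ t₀: H'(t) = t^p[(2 + p)a(t) + λt·(−F'(x(t)))·x(t) + (2λ + 2 − 2α + p)b(t) + λ(λ + 1 − α)(−2λ + p)c(t)]. -/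
/-!
Differentiate `E` directly. The equation of motion turns `λx' + x' + tx''` into
`(λ + 1 - α)x' - t∇F(x)`, so for any potential on a Hilbert space
`E' = 2tF(x) - λt⟪∇F(x), x⟫ + (λ + 1 - α)(2λ⟪x, x'⟫ + t‖x'‖²)`.
The weight `t^p` adds `(p/t)E`, and expanding `‖λx + tx'‖² = λ²‖x‖² + 2λt⟪x, x'⟫ + t²‖x'‖²`
regroups `t^{-p}H'` into the combination of `a`, `b`, `c` in the statement.
-/

open RealInnerProductSpace

section

variable {V : Type*} [NormedAddCommGroup V] [InnerProductSpace ℝ V] [CompleteSpace V]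

noncomputable def dampedEnergy (F : V → ℝ) (α lam : ℝ) (x x' : ℝ → V) (t : ℝ) : ℝ :=
  t ^ 2 * F (x t) + (1 / 2) * ‖lam • x t + t • x' t‖ ^ 2 + (lam * (lam + 1 - α) / 2) * ‖x t‖ ^ 2

theorem hasDerivAt_dampedEnergy {F : V → ℝ} {g : V} {α lam t : ℝ} {x x' x'' : ℝ → V}
    (hF : HasGradientAt F g (x t)) (hx : HasDerivAt x (x' t) t) (hx' : HasDerivAt x' (x'' t) t)
    (hode : x'' t + (α / t) • x' t + g = 0) (ht : t ≠ 0) :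
    HasDerivAt (dampedEnergy F α lam x x')
      (2 * t * F (x t) - lam * t * ⟪g, x t⟫
        + (lam + 1 - α) * (2 * lam * ⟪x t, x' t⟫ + t * ‖x' t‖ ^ 2)) t := by
  have hFx : HasDerivAt (fun s => F (x s)) ⟪g, x' t⟫ t :=
    hF.hasFDerivAt.comp_hasDerivAt t hx
  have hv : HasDerivAt (fun s => lam • x s + s • x' s)
      (lam • x' t + (t • x'' t + (1 : ℝ) • x' t)) t :=
    (hx.const_smul lam).add ((hasDerivAt_id' t).smul hx')
  have hE := (((hasDerivAt_pow 2 t).mul hFx).add (hv.norm_sq.const_mul (1 / 2))).add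
    (hx.norm_sq.const_mul (lam * (lam + 1 - α) / 2))
  refine hE.congr_deriv ?_
  have hx'' : x'' t = -((α / t) • x' t) - g := by
    rw [← sub_eq_zero, ← hode]
    abel
  rw [hx'']
  simp only [inner_add_left, inner_add_right, inner_sub_right, inner_neg_right, inner_smul_left,
    inner_smul_right, real_inner_self_eq_norm_sq, real_inner_comm (x t) g,
    real_inner_comm (x' t) g, RCLike.conj_to_real]
  field_simp
  ring

end

theorem stmt17_general (γ α t₀ : ℝ) (hγ : 1 < γ) (ht₀ : 0 < t₀)
    (lam p : ℝ)
    (x x' x'' : ℝ → ℝ)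
    (hx : ∀ t ∈ Set.Ici t₀, HasDerivAt x (x' t) t)
    (hx' : ∀ t ∈ Set.Ici t₀, HasDerivAt x' (x'' t) t)
    (hode : ∀ t ∈ Set.Ici t₀, x'' t + (α / t) * x' t + γ * |x t| ^ (γ - 2) * x t = 0) :
    ∀ t ∈ Set.Ici t₀,
      HasDerivAt (fun s : ℝ => s ^ p * (s ^ 2 * |x s| ^ γ
          + (1 / 2) * |lam * x s + s * x' s| ^ 2
          + (lam * (lam + 1 - α) / 2) * |x s| ^ 2))
        (t ^ p * ((2 + p) * (t * |x t| ^ γ)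
          + lam * t * (-(γ * |x t| ^ (γ - 2) * x t)) * x t
          + (2 * lam + 2 - 2 * α + p) * ((1 / (2 * t)) * |lam * x t + t * x' t| ^ 2)
          + lam * (lam + 1 - α) * (-(2 * lam) + p) * ((1 / (2 * t)) * |x t| ^ 2))) t := by
  intro t ht
  have htpos : 0 < t := ht₀.trans_le ht
  have hF : HasGradientAt (fun y : ℝ => |y| ^ γ) (γ * |x t| ^ (γ - 2) * x t) (x t) := by
    simpa using (hasDerivAt_abs_rpow (x t) hγ).hasGradientAt
  have hE := (Real.hasDerivAt_rpow_const (p := p) (Or.inl htpos.ne')).mul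
    (hasDerivAt_dampedEnergy (lam := lam) hF (hx t ht) (hx' t ht) (hode t ht) htpos.ne')
  simp only [dampedEnergy, Real.norm_eq_abs, smul_eq_mul, Real.inner_apply] at hE
  refine hE.congr_deriv ?_
  rw [Real.rpow_sub_one htpos.ne', sq_abs, sq_abs, sq_abs]
  field_simp
  ring

/-- For `F y = |y|^γ` (`γ > 1`, minimum `F* = 0` at `x* = 0`), along a
solution of `x'' + (α/t) x' + F'(x) = 0`, with `ξ = λ(λ+1−α)` and `H(t) = t^p E(t)`,
one has the exact identity
`H'(t) = t^p[(2+p) a(t) + λ t (−F'(x t)) x t + (2λ+2−2α+p) b(t) + λ(λ+1−α)(−2λ+p) c(t)]`. -/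
theorem stmt17 (γ α t₀ : ℝ) (hγ : 1 < γ) (hα : 0 < α) (ht₀ : 0 < t₀)
    (lam p : ℝ)
    (x x' x'' : ℝ → ℝ)
    (hx : ∀ t ∈ Set.Ici t₀, HasDerivAt x (x' t) t)
    (hx' : ∀ t ∈ Set.Ici t₀, HasDerivAt x' (x'' t) t)
    (hx'' : ContinuousOn x'' (Set.Ici t₀))
    (hode : ∀ t ∈ Set.Ici t₀, x'' t + (α / t) * x' t + γ * |x t| ^ (γ - 2) * x t = 0) :
    ∀ t ∈ Set.Ici t₀,
      HasDerivAt (fun s : ℝ => s ^ p * (s ^ 2 * |x s| ^ γ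
          + (1 / 2) * |lam * x s + s * x' s| ^ 2
          + (lam * (lam + 1 - α) / 2) * |x s| ^ 2))
        (t ^ p * ((2 + p) * (t * |x t| ^ γ)
          + lam * t * (-(γ * |x t| ^ (γ - 2) * x t)) * x t
          + (2 * lam + 2 - 2 * α + p) * ((1 / (2 * t)) * |lam * x t + t * x' t| ^ 2)
          + lam * (lam + 1 - α) * (-(2 * lam) + p) * ((1 / (2 * t)) * |x t| ^ 2))) t :=
  stmt17_general γ α t₀ hγ ht₀ lam p x x' x'' hx hx' hode
end
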